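/- Let u : ℝ³ → ℝ be smooth with u₁ ≠ 0 everywhere, and let a, b, c be nonzero reals with a + b + c = 0. Define for each λ ∈ ℝ the vector fields L₀ = ∂₃ - (u₃/u₁)∂₁ - λ b ∂₃ and L₁ = ∂₂ - (u₂/u₁)∂₁ + λ c ∂₂ on ℝ³. Then the Lie bracket [L₀, L₁] lies in the span of L₀ and L₁ for every λ if and only if u satisfies the dispersionless Hirota equation a u₁ u₂₃ + b u₂ u₁₃ + c u₃ u₁₂ = 0. -/

import Mathlib

/-- Partial derivative ∂ᵢf at x. -/
noncomputable def pd {n : ℕ} (i : Fin n) (f : (Fin n → ℝ) → ℝ) (x : Fin n → ℝ) : ℝ :=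
  fderiv ℝ f x (Pi.single i 1)

/-- Lie bracket of vector fields, componentwise. -/
noncomputable def br {n : ℕ} (X Y : (Fin n → ℝ) → (Fin n → ℝ)) (x : Fin n → ℝ) : Fin n → ℝ :=
  fun k => ∑ j, (X x j * pd j (fun y => Y y k) x - Y x j * pd j (fun y => X y k) x)

/-- L₀ = ∂₃ - (u₃/u₁)∂₁ - λ b ∂₃ -/
noncomputable def L0 (u : (Fin 3 → ℝ) → ℝ) (b lam : ℝ) : (Fin 3 → ℝ) → (Fin 3 → ℝ) :=
  fun x => ![-(pd 2 u x / pd 0 u x), 0, 1 - lam * b]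

/-- L₁ = ∂₂ - (u₂/u₁)∂₁ + λ c ∂₂ -/
noncomputable def L1 (u : (Fin 3 → ℝ) → ℝ) (c lam : ℝ) : (Fin 3 → ℝ) → (Fin 3 → ℝ) :=
  fun x => ![-(pd 1 u x / pd 0 u x), 1 + lam * c, 0]

lemma pd_const {n : ℕ} (i : Fin n) (c : ℝ) (x : Fin n → ℝ) : pd i (fun _ => c) x = 0 := by
  simp [pd]

lemma pd_neg {n : ℕ} (i : Fin n) (f : (Fin n → ℝ) → ℝ) (x : Fin n → ℝ) :
    pd i (fun y => -(f y)) x = -pd i f x := by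
  simp [pd, fderiv_neg]

lemma pd_mul {n : ℕ} (i : Fin n) {f g : (Fin n → ℝ) → ℝ} {x : Fin n → ℝ}
    (hf : DifferentiableAt ℝ f x) (hg : DifferentiableAt ℝ g x) :
    pd i (fun y => f y * g y) x = pd i f x * g x + f x * pd i g x := by
  simp only [pd, fderiv_fun_mul hf hg]
  simp
  ring

lemma pd_inv {n : ℕ} (i : Fin n) {g : (Fin n → ℝ) → ℝ} {x : Fin n → ℝ}
    (hg : DifferentiableAt ℝ g x) (hgx : g x ≠ 0) :
    pd i (fun y => (g y)⁻¹) x = -pd i g x / g x ^ 2 := by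
  have h1 : HasFDerivAt (fun y : ℝ => y⁻¹)
      ((1 : ℝ →L[ℝ] ℝ).smulRight (-(g x ^ 2)⁻¹)) (g x) :=
    (hasDerivAt_inv hgx).hasFDerivAt
  have h2 : HasFDerivAt (fun y => (g y)⁻¹)
      (((1 : ℝ →L[ℝ] ℝ).smulRight (-(g x ^ 2)⁻¹)).comp (fderiv ℝ g x)) x :=
    h1.comp x hg.hasFDerivAt
  rw [pd, h2.fderiv]
  simp [pd]
  ring

lemma pd_div {n : ℕ} (i : Fin n) {f g : (Fin n → ℝ) → ℝ} {x : Fin n → ℝ}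
    (hf : DifferentiableAt ℝ f x) (hg : DifferentiableAt ℝ g x) (hgx : g x ≠ 0) :
    pd i (fun y => f y / g y) x = (pd i f x * g x - f x * pd i g x) / g x ^ 2 := by
  simp only [div_eq_mul_inv]
  rw [pd_mul i (g := fun y => (g y)⁻¹) hf (hg.inv hgx), pd_inv i hg hgx]
  field_simp
  ring

lemma contDiff_pd {n : ℕ} (i : Fin n) {u : (Fin n → ℝ) → ℝ} (hu : ContDiff ℝ (⊤ : ℕ∞) u) :
    ContDiff ℝ (⊤ : ℕ∞) (pd i u) :=
  (hu.fderiv_right (by simp)).clm_apply contDiff_const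

lemma pd_symm {n : ℕ} {u : (Fin n → ℝ) → ℝ} (hu : ContDiff ℝ (⊤ : ℕ∞) u) (i j : Fin n)
    (x : Fin n → ℝ) : pd i (pd j u) x = pd j (pd i u) x := by
  have hd1 : Differentiable ℝ u := hu.differentiable (by simp)
  have hx : DifferentiableAt ℝ (fderiv ℝ u) x :=
    ((hu.fderiv_right (m := (⊤ : ℕ∞)) (by simp)).differentiable (by simp)) x
  have hsym := second_derivative_symmetric (f := u) (f' := fderiv ℝ u)
    (f'' := fderiv ℝ (fderiv ℝ u) x) (fun y => (hd1 y).hasFDerivAt) hx.hasFDerivAt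
  have key : ∀ i j : Fin n, pd i (pd j u) x
      = fderiv ℝ (fderiv ℝ u) x (Pi.single i 1) (Pi.single j 1) := by
    intro i j
    show fderiv ℝ (fun y => fderiv ℝ u y (Pi.single j 1)) x (Pi.single i 1) = _
    rw [fderiv_clm_apply hx (differentiableAt_const _)]
    simp
  rw [key i j, key j i, hsym]

lemma br_eval (u : (Fin 3 → ℝ) → ℝ) (hu : ContDiff ℝ (⊤ : ℕ∞) u) (hu1 : ∀ x, pd 0 u x ≠ 0)
    (b c lam : ℝ) (x : Fin 3 → ℝ) :
    br (L0 u b lam) (L1 u c lam) x =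
      ![lam * (b * (pd 1 (pd 2 u) x * pd 0 u x - pd 1 u x * pd 0 (pd 2 u) x)
          + c * (pd 1 (pd 2 u) x * pd 0 u x - pd 2 u x * pd 0 (pd 1 u) x)) / pd 0 u x ^ 2,
        0, 0] := by
  have hd : ∀ i : Fin 3, Differentiable ℝ (pd i u) :=
    fun i => (contDiff_pd i hu).differentiable (by simp)
  have hP : ∀ j : Fin 3, pd j (fun y => pd 2 u y / pd 0 u y) x
      = (pd j (pd 2 u) x * pd 0 u x - pd 2 u x * pd j (pd 0 u) x) / pd 0 u x ^ 2 :=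
    fun j => pd_div j ((hd 2).differentiableAt) ((hd 0).differentiableAt) (hu1 x)
  have hQ : ∀ j : Fin 3, pd j (fun y => pd 1 u y / pd 0 u y) x
      = (pd j (pd 1 u) x * pd 0 u x - pd 1 u x * pd j (pd 0 u) x) / pd 0 u x ^ 2 :=
    fun j => pd_div j ((hd 1).differentiableAt) ((hd 0).differentiableAt) (hu1 x)
  funext k
  fin_cases k
  · show br (L0 u b lam) (L1 u c lam) x 0 = ![lam * (b * (pd 1 (pd 2 u) x * pd 0 u x - pd 1 u x * pd 0 (pd 2 u) x) + c * (pd 1 (pd 2 u) x * pd 0 u x - pd 2 u x * pd 0 (pd 1 u) x)) / pd 0 u x ^ 2, 0, 0] (0 : Fin 3)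
    simp only [br, L0, L1, Fin.sum_univ_three, Matrix.cons_val_zero, Matrix.cons_val_one,
      Matrix.head_cons, Matrix.cons_val_two, Matrix.tail_cons, pd_neg]
    rw [hP 0, hP 1, hQ 0, hQ 2, pd_symm hu 2 1, pd_symm hu 2 0, pd_symm hu 1 0]
    have h1 := hu1 x
    field_simp
    ring
  · show br (L0 u b lam) (L1 u c lam) x 1 = ![lam * (b * (pd 1 (pd 2 u) x * pd 0 u x - pd 1 u x * pd 0 (pd 2 u) x) + c * (pd 1 (pd 2 u) x * pd 0 u x - pd 2 u x * pd 0 (pd 1 u) x)) / pd 0 u x ^ 2, 0, 0] (1 : Fin 3)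
    simp [br, L0, L1, Fin.sum_univ_three, pd]
  · show br (L0 u b lam) (L1 u c lam) x 2 = ![lam * (b * (pd 1 (pd 2 u) x * pd 0 u x - pd 1 u x * pd 0 (pd 2 u) x) + c * (pd 1 (pd 2 u) x * pd 0 u x - pd 2 u x * pd 0 (pd 1 u) x)) / pd 0 u x ^ 2, 0, 0] (2 : Fin 3)
    simp [br, L0, L1, Fin.sum_univ_three, pd]

theorem stmt0 (u : (Fin 3 → ℝ) → ℝ) (hu : ContDiff ℝ (⊤ : ℕ∞) u)
    (hu1 : ∀ x, pd 0 u x ≠ 0)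
    (a b c : ℝ) (ha : a ≠ 0) (hb : b ≠ 0) (hc : c ≠ 0) (habc : a + b + c = 0) :
    (∀ (lam : ℝ) (x : Fin 3 → ℝ), ∃ α β : ℝ,
        br (L0 u b lam) (L1 u c lam) x = α • L0 u b lam x + β • L1 u c lam x)
      ↔ (∀ x, a * pd 0 u x * pd 1 (pd 2 u) x + b * pd 1 u x * pd 0 (pd 2 u) x
          + c * pd 2 u x * pd 0 (pd 1 u) x = 0) := by
  constructor
  · intro h x
    have hbpos : 0 < |b| := abs_pos.mpr hb
    have hcpos : 0 < |c| := abs_pos.mpr hc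
    obtain ⟨lam, h0, hgtb, hgtc⟩ : ∃ lam : ℝ, 0 < lam ∧ |b|⁻¹ < lam ∧ |c|⁻¹ < lam := by
      refine ⟨|b|⁻¹ + |c|⁻¹ + 1, by positivity, ?_, ?_⟩
      · have : (0:ℝ) < |c|⁻¹ := by positivity
        linarith
      · have : (0:ℝ) < |b|⁻¹ := by positivity
        linarith
    have hlb : 1 - lam * b ≠ 0 := by
      intro hE
      have hE' : lam * b = 1 := by linarith
      have h1 : |lam * b| = 1 := by rw [hE']; simp
      rw [abs_mul, abs_of_pos h0] at h1
      have e1 : |b|⁻¹ * |b| = 1 := inv_mul_cancel₀ (ne_of_gt hbpos)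
      have key : |b|⁻¹ * |b| < lam * |b| := mul_lt_mul_of_pos_right hgtb hbpos
      rw [e1] at key
      linarith
    have hlc : 1 + lam * c ≠ 0 := by
      intro hE
      have hE' : lam * c = -1 := by linarith
      have h1 : |lam * c| = 1 := by rw [hE']; simp
      rw [abs_mul, abs_of_pos h0] at h1
      have e1 : |c|⁻¹ * |c| = 1 := inv_mul_cancel₀ (ne_of_gt hcpos)
      have key : |c|⁻¹ * |c| < lam * |c| := mul_lt_mul_of_pos_right hgtc hcpos
      rw [e1] at key
      linarith
    obtain ⟨α, β, hαβ⟩ := h lam x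
    rw [br_eval u hu hu1] at hαβ
    have h2 := congrFun hαβ 2
    have h1 := congrFun hαβ 1
    have h0' := congrFun hαβ 0
    simp [L0, L1] at h2 h1 h0'
    have hα : α = 0 := h2.resolve_right hlb
    have hβ : β = 0 := h1.resolve_right hlc
    rw [hα, hβ] at h0'
    simp at h0'
    have hN : b * (pd 1 (pd 2 u) x * pd 0 u x - pd 1 u x * pd 0 (pd 2 u) x)
        + c * (pd 1 (pd 2 u) x * pd 0 u x - pd 2 u x * pd 0 (pd 1 u) x) = 0 := by
      rcases h0' with (h' | h') | h'
      · exact absurd h' (ne_of_gt h0)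
      · exact h'
      · exact absurd h' (hu1 x)
    linear_combination (-1 : ℝ) * hN + (pd 0 u x * pd 1 (pd 2 u) x) * habc
  · intro h lam x
    refine ⟨0, 0, ?_⟩
    rw [br_eval u hu hu1]
    have hN : b * (pd 1 (pd 2 u) x * pd 0 u x - pd 1 u x * pd 0 (pd 2 u) x)
        + c * (pd 1 (pd 2 u) x * pd 0 u x - pd 2 u x * pd 0 (pd 1 u) x) = 0 := by
      linear_combination -(h x) + (pd 0 u x * pd 1 (pd 2 u) x) * habc
    rw [hN]
    funext k
    fin_cases k <;> simp [L0, L1]
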